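/- Let {|ψ_i⟩}_{i=1}^N be unit vectors in ℂ^d and {p_i} a probability distribution such that ∑_i p_i |ψ_i⟩⟨ψ_i|^{⊗k} = Π_sym(d,k)/Tr(Π_sym(d,k)) (i.e., the ensemble forms a state k-design). Then the POVM given by M_i = C(d+k-1,k) p_i |ψ_i⟩⟨ψ_i|^{⊗k} + (I − Π_sym(d,k))/N achieves average success probability C(d+k-1,k)/N for discriminating the k-copy states with uniform prior. -/

import Mathlib

open ComplexOrder
open scoped BigOperators

/-- The `k`-fold tensor power of a matrix on `ℂ^d`. -/
noncomputable def kronPow (d k : ℕ) (A : Matrix (Fin d) (Fin d) ℂ) :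
    Matrix (Fin k → Fin d) (Fin k → Fin d) ℂ :=
  Matrix.of fun f g => ∏ l, A (f l) (g l)

/-- The rank-one projector `|ψ⟩⟨ψ|`. -/
noncomputable def pureProj (d : ℕ) (ψ : Fin d → ℂ) : Matrix (Fin d) (Fin d) ℂ :=
  Matrix.of fun a b => ψ a * star (ψ b)

/-- The permutation operator `V_π` on `(ℂ^d)^{⊗k}`. -/
noncomputable def permOp (d k : ℕ) (π : Equiv.Perm (Fin k)) :
    Matrix (Fin k → Fin d) (Fin k → Fin d) ℂ :=
  Matrix.of fun f g => if (∀ i, f (π i) = g i) then 1 else 0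

/-- The projector onto the symmetric subspace of `(ℂ^d)^{⊗k}`. -/
noncomputable def symProj (d k : ℕ) : Matrix (Fin k → Fin d) (Fin k → Fin d) ℂ :=
  ((k.factorial : ℂ))⁻¹ • ∑ π : Equiv.Perm (Fin k), permOp d k π

open scoped Matrix

-- tensor vector
noncomputable def tvec (d k : ℕ) (v : Fin d → ℂ) : (Fin k → Fin d) → ℂ :=
  fun f => ∏ l, v (f l)

lemma kronPow_pureProj (d k : ℕ) (v : Fin d → ℂ) : kronPow d k (pureProj d v) =
    Matrix.of fun f g => tvec d k v f * star (tvec d k v g) := by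
  ext f g
  simp only [kronPow, pureProj, tvec, Matrix.of_apply, star_prod, ← Finset.prod_mul_distrib]

lemma psd_rank1 {n : Type*} [Fintype n] (v : n → ℂ) :
    (Matrix.of fun f g => v f * star (v g)).PosSemidef := by
  have h := Matrix.posSemidef_self_mul_conjTranspose (Matrix.replicateCol Unit v)
  convert h using 1
  ext f g
  simp [Matrix.mul_apply, Matrix.replicateCol]

lemma psd_smul {n : Type*} [Fintype n] {M : Matrix n n ℂ} (hM : M.PosSemidef)
    {c : ℂ} (hc : 0 ≤ c) : (c • M).PosSemidef := by
  refine Matrix.posSemidef_iff_dotProduct_mulVec.mpr ⟨?_, ?_⟩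
  · show (c • M).conjTranspose = _
    rw [Matrix.conjTranspose_smul, hM.1.eq]
    congr 1
    have him : c.im = 0 := (Complex.le_def.mp hc).2.symm
    exact Complex.conj_eq_iff_im.mpr him
  · intro x
    rw [Matrix.smul_mulVec, dotProduct_smul, smul_eq_mul]
    exact mul_nonneg hc (hM.dotProduct_mulVec_nonneg x)

lemma permOp_mul_permOp (d k : ℕ) (π σ : Equiv.Perm (Fin k)) :
    permOp d k π * permOp d k σ = permOp d k (π * σ) := by
  ext f g
  rw [Matrix.mul_apply, Finset.sum_eq_single (fun i => f (π i))]
  · simp only [permOp, Matrix.of_apply, Equiv.Perm.mul_apply]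
    rw [if_pos fun _ => trivial, one_mul]
    congr
  · intro h _ hne
    simp only [permOp, Matrix.of_apply]
    rw [if_neg, zero_mul]
    intro hc
    exact hne (funext fun i => (hc i).symm)
  · intro hmem; exact absurd (Finset.mem_univ _) hmem

lemma permOp_conjTranspose (d k : ℕ) (π : Equiv.Perm (Fin k)) :
    (permOp d k π)ᴴ = permOp d k π⁻¹ := by
  ext f g
  simp only [Matrix.conjTranspose_apply, permOp, Matrix.of_apply]
  rw [apply_ite (star : ℂ → ℂ), star_one, star_zero]
  refine if_congr ?_ rfl rfl
  constructor
  · intro h i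
    have := h (π⁻¹ i)
    simpa using this.symm
  · intro h i
    have := h (π i)
    simpa using this.symm

lemma symProj_herm (d k : ℕ) : (symProj d k).IsHermitian := by
  show (symProj d k)ᴴ = _
  unfold symProj
  rw [Matrix.conjTranspose_smul, Matrix.conjTranspose_sum]
  simp_rw [permOp_conjTranspose]
  rw [show (star ((k.factorial : ℂ))⁻¹) = ((k.factorial : ℂ))⁻¹ by
    simp [← Complex.ofReal_natCast]]
  congr 1
  exact Fintype.sum_equiv (Equiv.inv _) _ _ (fun π => rfl)

lemma symProj_mul_symProj (d k : ℕ) : symProj d k * symProj d k = symProj d k := by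
  have hk : (k.factorial : ℂ) ≠ 0 := Nat.cast_ne_zero.mpr k.factorial_ne_zero
  unfold symProj
  rw [Matrix.smul_mul, Matrix.mul_smul, smul_smul, Finset.sum_mul]
  simp_rw [Finset.mul_sum, permOp_mul_permOp]
  have h1 : ∀ π : Equiv.Perm (Fin k), (∑ σ : Equiv.Perm (Fin k), permOp d k (π * σ))
      = ∑ τ : Equiv.Perm (Fin k), permOp d k τ := fun π =>
    Fintype.sum_equiv (Equiv.mulLeft π) _ _ (fun σ => rfl)
  simp_rw [h1]
  rw [Finset.sum_const, Finset.card_univ, Fintype.card_perm, Fintype.card_fin,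
    ← Nat.cast_smul_eq_nsmul ℂ, smul_smul]
  congr 1
  field_simp

lemma permOp_mul_kron (d k : ℕ) (v : Fin d → ℂ) (π : Equiv.Perm (Fin k)) :
    permOp d k π * kronPow d k (pureProj d v) = kronPow d k (pureProj d v) := by
  rw [kronPow_pureProj]
  ext f g
  rw [Matrix.mul_apply, Finset.sum_eq_single (fun i => f (π i))]
  · simp only [permOp, Matrix.of_apply]
    rw [if_pos fun _ => trivial, one_mul]
    congr 1
    exact Equiv.prod_comp π (fun l => v (f l))
  · intro h _ hne
    simp only [permOp, Matrix.of_apply]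
    rw [if_neg, zero_mul]
    intro hc
    exact hne (funext fun i => (hc i).symm)
  · intro hmem; exact absurd (Finset.mem_univ _) hmem

lemma kron_mul_permOp (d k : ℕ) (v : Fin d → ℂ) (π : Equiv.Perm (Fin k)) :
    kronPow d k (pureProj d v) * permOp d k π = kronPow d k (pureProj d v) := by
  rw [kronPow_pureProj]
  ext f g
  rw [Matrix.mul_apply, Finset.sum_eq_single (fun i => g (π⁻¹ i))]
  · simp only [permOp, Matrix.of_apply]
    rw [if_pos (fun i => by simp), mul_one]
    congr 2
    exact Equiv.prod_comp π⁻¹ (fun l => v (g l))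
  · intro h _ hne
    simp only [permOp, Matrix.of_apply]
    rw [if_neg, mul_zero]
    intro hc
    refine hne (funext fun j => ?_)
    have := hc (π⁻¹ j)
    simpa using this
  · intro hmem; exact absurd (Finset.mem_univ _) hmem

lemma symProj_mul_kron (d k : ℕ) (v : Fin d → ℂ) :
    symProj d k * kronPow d k (pureProj d v) = kronPow d k (pureProj d v) := by
  have hk : (k.factorial : ℂ) ≠ 0 := Nat.cast_ne_zero.mpr k.factorial_ne_zero
  unfold symProj
  rw [Matrix.smul_mul, Finset.sum_mul]
  simp_rw [permOp_mul_kron]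
  rw [Finset.sum_const, Finset.card_univ, Fintype.card_perm, Fintype.card_fin,
    ← Nat.cast_smul_eq_nsmul ℂ, smul_smul, inv_mul_cancel₀ hk, one_smul]

lemma kron_mul_symProj (d k : ℕ) (v : Fin d → ℂ) :
    kronPow d k (pureProj d v) * symProj d k = kronPow d k (pureProj d v) := by
  have hk : (k.factorial : ℂ) ≠ 0 := Nat.cast_ne_zero.mpr k.factorial_ne_zero
  unfold symProj
  rw [Matrix.mul_smul, Finset.mul_sum]
  simp_rw [kron_mul_permOp]
  rw [Finset.sum_const, Finset.card_univ, Fintype.card_perm, Fintype.card_fin,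
    ← Nat.cast_smul_eq_nsmul ℂ, smul_smul, inv_mul_cancel₀ hk, one_smul]

lemma tvec_norm (d k : ℕ) (v : Fin d → ℂ) (hv : ∑ j, star (v j) * v j = 1) :
    ∑ h : Fin k → Fin d, star (tvec d k v h) * tvec d k v h = 1 := by
  simp only [tvec, star_prod, ← Finset.prod_mul_distrib]
  have hps := Fintype.prod_sum (κ := fun _ : Fin k => Fin d)
    (f := fun _ j => star (v j) * v j)
  rw [← hps, hv]
  simp

lemma kron_mul_kron (d k : ℕ) (v : Fin d → ℂ) (hv : ∑ j, star (v j) * v j = 1) :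
    kronPow d k (pureProj d v) * kronPow d k (pureProj d v) = kronPow d k (pureProj d v) := by
  rw [kronPow_pureProj]
  ext f g
  rw [Matrix.mul_apply]
  simp only [Matrix.of_apply]
  have h2 : ∀ h : Fin k → Fin d,
      (tvec d k v f * star (tvec d k v h)) * (tvec d k v h * star (tvec d k v g))
      = (tvec d k v f * star (tvec d k v g)) * (star (tvec d k v h) * tvec d k v h) :=
    fun h => by ring
  rw [Finset.sum_congr rfl (fun h _ => h2 h), ← Finset.mul_sum, tvec_norm d k v hv, mul_one]

lemma kron_trace (d k : ℕ) (v : Fin d → ℂ) (hv : ∑ j, star (v j) * v j = 1) :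
    (kronPow d k (pureProj d v)).trace = 1 := by
  rw [kronPow_pureProj]
  unfold Matrix.trace
  simp only [Matrix.diag_apply, Matrix.of_apply]
  rw [Finset.sum_congr rfl (fun h _ => mul_comm _ _), tvec_norm d k v hv]

lemma psd_one_sub_symProj (d k : ℕ) :
    ((1 : Matrix (Fin k → Fin d) (Fin k → Fin d) ℂ) - symProj d k).PosSemidef := by
  have h1 : ((1 : Matrix (Fin k → Fin d) (Fin k → Fin d) ℂ) - symProj d k).conjTranspose
      = 1 - symProj d k := by
    rw [Matrix.conjTranspose_sub, Matrix.conjTranspose_one, (symProj_herm d k).eq]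
  have h2 : ((1 : Matrix (Fin k → Fin d) (Fin k → Fin d) ℂ) - symProj d k).conjTranspose
      * (1 - symProj d k) = 1 - symProj d k := by
    rw [h1, Matrix.sub_mul, Matrix.mul_sub, Matrix.mul_sub, Matrix.one_mul, Matrix.one_mul,
      Matrix.mul_one, symProj_mul_symProj]
    abel
  rw [← h2]
  exact Matrix.posSemidef_conjTranspose_mul_self _

theorem kdesign_achieves_bound (d N k : ℕ) (hN : 0 < N)
    (ψ : Fin N → Fin d → ℂ) (hψ : ∀ i, ∑ j, star (ψ i j) * ψ i j = 1)
    (p : Fin N → ℝ) (hp0 : ∀ i, 0 ≤ p i) (hp1 : ∑ i, p i = 1)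
    (hdesign : ∑ i, (p i : ℂ) • kronPow d k (pureProj d (ψ i)) =
      ((Nat.choose (d + k - 1) k : ℂ))⁻¹ • symProj d k) :
    (∀ i, ((Nat.choose (d + k - 1) k : ℂ) • (p i : ℂ) • kronPow d k (pureProj d (ψ i)) +
        (N : ℂ)⁻¹ • (1 - symProj d k)).PosSemidef) ∧
    (∑ i, ((Nat.choose (d + k - 1) k : ℂ) • (p i : ℂ) • kronPow d k (pureProj d (ψ i)) +
        (N : ℂ)⁻¹ • (1 - symProj d k))) = 1 ∧
    (N : ℂ)⁻¹ * ∑ i, (kronPow d k (pureProj d (ψ i)) *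
        ((Nat.choose (d + k - 1) k : ℂ) • (p i : ℂ) • kronPow d k (pureProj d (ψ i)) +
          (N : ℂ)⁻¹ • (1 - symProj d k))).trace =
      (Nat.choose (d + k - 1) k : ℂ) / N := by
  have hd : 0 < d := by
    rcases Nat.eq_zero_or_pos d with h0 | h
    · subst h0
      have := hψ ⟨0, hN⟩
      simp at this
    · exact h
  have hC : 0 < Nat.choose (d + k - 1) k := Nat.choose_pos (by omega)
  have hCc : ((Nat.choose (d + k - 1) k : ℂ)) ≠ 0 := Nat.cast_ne_zero.mpr hC.ne'
  have hNc : ((N : ℂ)) ≠ 0 := Nat.cast_ne_zero.mpr hN.ne'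
  have hNinv : (0 : ℂ) ≤ (N : ℂ)⁻¹ := by
    rw [show ((N:ℂ))⁻¹ = (((N:ℝ)⁻¹ : ℝ) : ℂ) by push_cast; ring]
    rw [Complex.zero_le_real]
    positivity
  refine ⟨?_, ?_, ?_⟩
  · intro i
    apply Matrix.PosSemidef.add
    · rw [smul_smul]
      refine psd_smul ?_ ?_
      · rw [kronPow_pureProj]
        exact psd_rank1 _
      · apply mul_nonneg
        · rw [show ((Nat.choose (d + k - 1) k : ℂ)) = (((Nat.choose (d + k - 1) k : ℝ)) : ℂ)
            by push_cast; ring]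
          rw [Complex.zero_le_real]
          positivity
        · rw [Complex.zero_le_real]
          exact hp0 i
    · exact psd_smul (psd_one_sub_symProj d k) hNinv
  · rw [Finset.sum_add_distrib, ← Finset.smul_sum, hdesign, smul_smul,
      mul_inv_cancel₀ hCc, one_smul, Finset.sum_const, Finset.card_univ, Fintype.card_fin,
      ← Nat.cast_smul_eq_nsmul ℂ, smul_smul, mul_inv_cancel₀ hNc, one_smul]
    abel
  · have htr : ∀ i : Fin N, (kronPow d k (pureProj d (ψ i)) *
        ((Nat.choose (d + k - 1) k : ℂ) • (p i : ℂ) • kronPow d k (pureProj d (ψ i)) +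
          (N : ℂ)⁻¹ • (1 - symProj d k))).trace
        = (Nat.choose (d + k - 1) k : ℂ) * (p i : ℂ) := by
      intro i
      rw [Matrix.mul_add, Matrix.mul_smul, Matrix.mul_smul, Matrix.mul_smul, Matrix.mul_sub,
        Matrix.mul_one, kron_mul_symProj, sub_self, smul_zero, add_zero,
        kron_mul_kron d k _ (hψ i), Matrix.trace_smul, Matrix.trace_smul,
        kron_trace d k _ (hψ i), smul_eq_mul, smul_eq_mul, mul_one]
    rw [Finset.sum_congr rfl (fun i _ => htr i), ← Finset.mul_sum]
    rw [show (∑ i, ((p i : ℂ))) = ((∑ i, p i : ℝ) : ℂ) by push_cast; ring, hp1]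
    rw [Complex.ofReal_one, mul_one, inv_mul_eq_div]
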